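/- Let (N₁, (W, S), N₂) be a net-abstraction, let (p, t) be a source-sink pair of N₂ with k = m₀₂(p), and let N₃ be obtained from N₂ by removing p and t. Let W' = W ∪ {p} and let S' be the set of valuations e : W' → ℕ such that the restriction of e to W lies in S and e(p) ≤ k. Then (N₁, (W', S'), N₃) is a net-abstraction. -/

import Mathlib

/-! Marked Petri nets with places drawn from a type `X` and transitions drawn from a type `T`.
Markings are total functions `X → ℕ`; a marking (valuation) "on a set of places `V`" is a
function that vanishes outside of `V`. -/

/-- The restriction of a valuation to a set `V` (zero outside `V`). -/
noncomputable def restrictTo {X : Type} (V : Set X) (f : X → ℕ) : X → ℕ :=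
  V.indicator f

/-- Valuations on `V`: functions vanishing outside `V`. -/
def ValuationOn {X : Type} (V : Set X) : Set (X → ℕ) :=
  {f | ∀ x, x ∉ V → f x = 0}

/-- Lifting of a set `E` of valuations on `V` to a superset `U` of `V`:
the valuations on `U` whose restriction to `V` lies in `E`. -/
def liftTo {X : Type} (E : Set (X → ℕ)) (V U : Set X) : Set (X → ℕ) :=
  {f | f ∈ ValuationOn U ∧ restrictTo V f ∈ E}

/-- Projection of a set `E` of valuations to a subset `U`: the restrictions to `U`
of the members of `E`. -/
def projTo {X : Type} (E : Set (X → ℕ)) (U : Set X) : Set (X → ℕ) :=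
  (restrictTo U) '' E

/-- A marked Petri net `N = (P, T, Pre, Post, m₀)`. The set of places is `N.places ⊆ X`
and the set of transitions is `N.trans ⊆ T`. -/
structure PNet (X T : Type) where
  places : Set X
  trans : Set T
  Pre : T → X → ℕ
  Post : T → X → ℕ
  m0 : X → ℕ

namespace PNet

variable {X T : Type}

/-- Well-formedness: the sets of places and transitions are finite, and the initial
marking as well as the pre/post-conditions of the transitions vanish outside the places. -/
def WF (N : PNet X T) : Prop :=
  N.places.Finite ∧ N.trans.Finite ∧
    (∀ x, x ∉ N.places → N.m0 x = 0) ∧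
    (∀ t ∈ N.trans, ∀ x, x ∉ N.places → N.Pre t x = 0 ∧ N.Post t x = 0)

/-- A transition `t` is enabled at marking `m` if `m ≥ Pre(t)` pointwise. -/
def Enabled (N : PNet X T) (t : T) (m : X → ℕ) : Prop :=
  t ∈ N.trans ∧ ∀ x, N.Pre t x ≤ m x

/-- The marking obtained by firing `t` at `m` : `m - Pre(t) + Post(t)`. -/
def fire (N : PNet X T) (t : T) (m : X → ℕ) : X → ℕ :=
  fun x => m x - N.Pre t x + N.Post t x

/-- One-step firing relation between markings. -/
def Step (N : PNet X T) (m m' : X → ℕ) : Prop :=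
  ∃ t, N.Enabled t m ∧ m' = N.fire t m

/-- The reachability set (state space) `R(N)`: all markings reachable from `m₀`. -/
def R (N : PNet X T) : Set (X → ℕ) :=
  {m | Relation.ReflTransGen N.Step N.m0 m}

/-- `FireSeq N m σ m'` : the firing sequence `σ` can be fired from `m`, yielding `m'`. -/
def FireSeq (N : PNet X T) : (X → ℕ) → List T → (X → ℕ) → Prop
  | m, [], m' => m' = m
  | m, t :: σ, m' => N.Enabled t m ∧ FireSeq N (N.fire t m) σ m'

/-- The sequence `σ` is firable from the marking `m`. -/
def Firable (N : PNet X T) (m : X → ℕ) (σ : List T) : Prop :=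
  ∃ m', N.FireSeq m σ m'

/-- Displacement `Δ(t) = Post(t) - Pre(t) : P → ℤ` of a transition. -/
def delta (N : PNet X T) (t : T) : X → ℤ :=
  fun x => (N.Post t x : ℤ) - (N.Pre t x : ℤ)

/-- Displacement `Δ(σ)` of a firing sequence. -/
def deltaSeq (N : PNet X T) (σ : List T) : X → ℤ :=
  fun x => (σ.map (fun t => N.delta t x)).sum

/-- `t` is a redundant transition witnessed by the sequence `σ`: `σ` avoids `t`,
has the same displacement as `t`, and is firable from the marking `Pre(t)`
(i.e. `H(t) ≥ H(σ)`). -/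
def RedundantTransition (N : PNet X T) (t : T) (σ : List T) : Prop :=
  t ∈ N.trans ∧ (∀ u ∈ σ, u ∈ N.trans ∧ u ≠ t) ∧
    N.deltaSeq σ = N.delta t ∧ N.Firable (N.Pre t) σ

/-- The net obtained by removing transition `t`. -/
def removeTrans (N : PNet X T) (t : T) : PNet X T :=
  { N with trans := N.trans \ {t} }

/-- `p` is a redundant place, witnessed by the set of places `I ⊆ P ∖ {p}`, the
valuation `v` (positive on `I ∪ {p}`) and the constant `b`. -/
def RedundantPlace (N : PNet X T) (p : X) (I : Finset X) (v : X → ℕ) (b : ℕ) : Prop :=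
  p ∈ N.places ∧ ↑I ⊆ N.places \ {p} ∧ v p ≠ 0 ∧ (∀ q ∈ I, v q ≠ 0) ∧
    ((b : ℤ) = (v p : ℤ) * (N.m0 p : ℤ) - ∑ q ∈ I, (v q : ℤ) * (N.m0 q : ℤ)) ∧
    (∀ t ∈ N.trans,
      (v p : ℤ) * (N.Pre t p : ℤ) - ∑ q ∈ I, (v q : ℤ) * (N.Pre t q : ℤ) ≤ (b : ℤ)) ∧
    (∀ t ∈ N.trans,
      (v p : ℤ) * ((N.Post t p : ℤ) - (N.Pre t p : ℤ))
        = ∑ q ∈ I, (v q : ℤ) * ((N.Post t q : ℤ) - (N.Pre t q : ℤ)))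

/-- The net obtained by removing place `p` (restriction to `P ∖ {p}`). -/
noncomputable def removePlace (N : PNet X T) (p : X) : PNet X T where
  places := N.places \ {p}
  trans := N.trans
  Pre := fun t => restrictTo (N.places \ {p}) (N.Pre t)
  Post := fun t => restrictTo (N.places \ {p}) (N.Post t)
  m0 := restrictTo (N.places \ {p}) N.m0

/-- Place `a` is the sum of places `p` and `q`, written `a = p ⊞ q`. -/
def IsSumPlace (N : PNet X T) (a p q : X) : Prop :=
  N.m0 a = N.m0 p + N.m0 q ∧
    ∀ t ∈ N.trans, N.Pre t a = N.Pre t p + N.Pre t q ∧ N.Post t a = N.Post t p + N.Post t q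

/-- Places `p` and `q` are chain-agglomerable, witnessed by the transition `t`. -/
def ChainAgglomerable (N : PNet X T) (p q : X) (t : T) : Prop :=
  p ∈ N.places ∧ q ∈ N.places ∧ p ≠ q ∧ t ∈ N.trans ∧
    N.Pre t p = 1 ∧ (∀ r, r ≠ p → N.Pre t r = 0) ∧
    N.Post t q = 1 ∧ (∀ r, r ≠ q → N.Post t r = 0) ∧
    (∀ t' ∈ N.trans, t' ≠ t → N.Post t' q = 0) ∧
    N.m0 q = 0

/-- Agglomeration of the set of places `A` as the fresh place `a`: the places become
`(P ∖ A) ∪ {a}`, the place `a` behaves as the sum of the places of `A`, and everything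
else is unchanged. -/
noncomputable def agglom [DecidableEq X] (N : PNet X T) (A : Finset X) (a : X) : PNet X T where
  places := (N.places \ ↑A) ∪ {a}
  trans := N.trans
  Pre := fun u => Function.update (restrictTo (N.places \ ↑A) (N.Pre u)) a (∑ x ∈ A, N.Pre u x)
  Post := fun u => Function.update (restrictTo (N.places \ ↑A) (N.Post u)) a (∑ x ∈ A, N.Post u x)
  m0 := Function.update (restrictTo (N.places \ ↑A) N.m0) a (∑ x ∈ A, N.m0 x)

/-- `(p, t)` is a source-sink pair. -/
def SourceSink (N : PNet X T) (p : X) (t : T) : Prop :=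
  p ∈ N.places ∧ t ∈ N.trans ∧
    (∀ u ∈ N.trans, N.Post u p = 0) ∧
    (∀ u ∈ N.trans, u ≠ t → N.Pre u p = 0) ∧
    N.Pre t p = 1 ∧ (∀ r, r ≠ p → N.Pre t r = 0) ∧
    (∀ r, N.Post t r = 0)

/-- The net obtained by removing the source-sink pair `(p, t)`. -/
noncomputable def removeSourceSink (N : PNet X T) (p : X) (t : T) : PNet X T where
  places := N.places \ {p}
  trans := N.trans \ {t}
  Pre := fun u => restrictTo (N.places \ {p}) (N.Pre u)
  Post := fun u => restrictTo (N.places \ {p}) (N.Post u)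
  m0 := restrictTo (N.places \ {p}) N.m0

end PNet

/-- `(N₁, (W, S), N₂)` is a net-abstraction:
`R(N₁) = ((R(N₂) ↑ V) ∩ (S ↑ V)) ↓ P₁` where `V = W ∪ P₁ ∪ P₂`. -/
def NetAbstraction {X T₁ T₂ : Type} (N₁ : PNet X T₁) (W : Set X) (S : Set (X → ℕ))
    (N₂ : PNet X T₂) : Prop :=
  N₁.R = projTo
    (liftTo N₂.R N₂.places (W ∪ N₁.places ∪ N₂.places) ∩
      liftTo S W (W ∪ N₁.places ∪ N₂.places))
    N₁.places

/-! Firing `t` only drains `p`, and every other transition neither reads nor writes `p`. Hence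
a marking `m` of `N₂` is reachable iff `m p ≤ m₀(p)` and the restriction of `m` to the
remaining places is reachable in `N₃`: conversely, fire `t` until `p` holds `m p` tokens, then
replay the run of `N₃` with `p` frozen. Substituting this description of `R(N₂)` into the
abstraction of `N₁` turns `p ≤ k` into a constraint on the new variable `p`. -/

open Function Relation

section Restriction

variable {X : Type}

lemma restrictTo_mem_valuationOn (V : Set X) (f : X → ℕ) : restrictTo V f ∈ ValuationOn V :=
  fun _ hx => Set.indicator_of_notMem hx f

lemma restrictTo_restrictTo (U V : Set X) (f : X → ℕ) :
    restrictTo U (restrictTo V f) = restrictTo (U ∩ V) f :=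
  Set.indicator_indicator U V f

lemma restrictTo_apply_of_mem {V : Set X} {x : X} (hx : x ∈ V) (f : X → ℕ) :
    restrictTo V f x = f x :=
  Set.indicator_of_mem hx f

lemma restrictTo_diff_singleton_eq_update [DecidableEq X] {P : Set X} {f : X → ℕ}
    (hf : f ∈ ValuationOn P) (p : X) : restrictTo (P \ {p}) f = update f p 0 := by
  funext x
  by_cases hxp : x = p
  · subst hxp
    simp [restrictTo]
  · rw [update_of_ne hxp]
    by_cases hx : x ∈ P
    · exact restrictTo_apply_of_mem (V := P \ {p}) ⟨hx, hxp⟩ f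
    · rw [restrictTo_mem_valuationOn _ f x (fun h => hx h.1), hf x hx]

lemma restrictTo_update_of_notMem [DecidableEq X] {V : Set X} {p : X} (hp : p ∉ V)
    (f : X → ℕ) (c : ℕ) : restrictTo V (update f p c) = restrictTo V f := by
  funext x
  by_cases hx : x ∈ V
  · rw [restrictTo_apply_of_mem hx, restrictTo_apply_of_mem hx,
      update_of_ne (ne_of_mem_of_not_mem hx hp)]
  · simp [restrictTo, Set.indicator_of_notMem hx]

end Restriction

namespace PNet

variable {X T : Type} {N : PNet X T} {p : X} {t u : T} {m m' : X → ℕ}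

lemma Step.apply_le_of_Post_eq_zero (hp : ∀ u ∈ N.trans, N.Post u p = 0) (h : N.Step m m') :
    m' p ≤ m p := by
  obtain ⟨u, ⟨hu, -⟩, rfl⟩ := h
  simp [fire, hp u hu]

lemma apply_le_m0_of_mem_R (hp : ∀ u ∈ N.trans, N.Post u p = 0) (hm : m ∈ N.R) :
    m p ≤ N.m0 p := by
  induction hm with
  | refl => exact le_rfl
  | tail _ hstep ih => exact (hstep.apply_le_of_Post_eq_zero hp).trans ih

lemma fire_update [DecidableEq X] (hpre : N.Pre u p = 0) (hpost : N.Post u p = 0)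
    (m : X → ℕ) (c : ℕ) : N.fire u (update m p c) = update (N.fire u m) p c := by
  funext x
  by_cases hxp : x = p
  · subst hxp
    simp [fire, hpre, hpost]
  · simp [fire, update_of_ne hxp]

lemma Enabled.update [DecidableEq X] (h : N.Enabled u m) (hpre : N.Pre u p = 0) (c : ℕ) :
    N.Enabled u (update m p c) := by
  refine ⟨h.1, fun x => ?_⟩
  by_cases hxp : x = p
  · subst hxp
    simp [hpre]
  · simpa [update_of_ne hxp] using h.2 x

lemma restrictTo_fire (N : PNet X T) (p : X) (t u : T) (m : X → ℕ) :
    restrictTo (N.places \ {p}) (N.fire u m) =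
      (N.removeSourceSink p t).fire u (restrictTo (N.places \ {p}) m) := by
  funext x
  by_cases hx : x ∈ N.places \ {p}
  · simp [removeSourceSink, fire, restrictTo_apply_of_mem hx]
  · simp [removeSourceSink, fire, restrictTo, Set.indicator_of_notMem hx]

lemma Enabled.removeSourceSink (h : N.Enabled u m) (hut : u ≠ t) :
    (N.removeSourceSink p t).Enabled u (restrictTo (N.places \ {p}) m) :=
  ⟨⟨h.1, hut⟩, fun x => Set.indicator_le_indicator (h.2 x)⟩

namespace SourceSink

lemma fire_self_eq_update [DecidableEq X] (hss : N.SourceSink p t) (m : X → ℕ) :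
    N.fire t m = update m p (m p - 1) := by
  obtain ⟨-, -, -, -, hpre, hpre_ne, hpost⟩ := hss
  funext x
  by_cases hxp : x = p
  · subst hxp
    simp [fire, hpre, hpost]
  · simp [fire, update_of_ne hxp, hpre_ne x hxp, hpost]

lemma reflTransGen_update_add [DecidableEq X] (hss : N.SourceSink p t) (m : X → ℕ) (c k : ℕ) :
    ReflTransGen N.Step (update m p (c + k)) (update m p c) := by
  induction k with
  | zero => exact .refl
  | succ k ih =>
    refine .head ⟨t, ⟨hss.2.1, fun x => ?_⟩, ?_⟩ ih
    · by_cases hxp : x = p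
      · subst hxp
        simp only [hss.2.2.2.2.1, update_self]
        omega
      · simp [hss.2.2.2.2.2.1 x hxp]
    · rw [hss.fire_self_eq_update]
      simp [← add_assoc]

lemma reflTransGen_removeSourceSink_of_step (hss : N.SourceSink p t) (h : N.Step m m') :
    ReflTransGen (N.removeSourceSink p t).Step
      (restrictTo (N.places \ {p}) m) (restrictTo (N.places \ {p}) m') := by
  classical
  obtain ⟨u, hu, rfl⟩ := h
  by_cases hut : u = t
  · subst hut
    rw [hss.fire_self_eq_update, restrictTo_update_of_notMem (fun h => h.2 rfl)]
  · exact .single ⟨u, hu.removeSourceSink hut, restrictTo_fire N p t u m⟩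

lemma removeSourceSink_Pre (hss : N.SourceSink p t) (hwf : N.WF) (hu : u ∈ N.trans)
    (hut : u ≠ t) :
    (N.removeSourceSink p t).Pre u = N.Pre u := by
  classical
  show restrictTo _ _ = _
  rw [restrictTo_diff_singleton_eq_update (fun x hx => (hwf.2.2.2 u hu x hx).1),
    update_eq_self_iff.2 (hss.2.2.2.1 u hu hut).symm]

lemma removeSourceSink_Post (hss : N.SourceSink p t) (hwf : N.WF) (hu : u ∈ N.trans) :
    (N.removeSourceSink p t).Post u = N.Post u := by
  classical
  show restrictTo _ _ = _
  rw [restrictTo_diff_singleton_eq_update (fun x hx => (hwf.2.2.2 u hu x hx).2),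
    update_eq_self_iff.2 (hss.2.2.1 u hu).symm]

lemma step_update_of_step_removeSourceSink [DecidableEq X] (hss : N.SourceSink p t)
    (hwf : N.WF) {a b : X → ℕ} (h : (N.removeSourceSink p t).Step a b) (c : ℕ) :
    N.Step (update a p c) (update b p c) := by
  obtain ⟨u, ⟨⟨hu, hut⟩, hle⟩, rfl⟩ := h
  have hut : u ≠ t := hut
  have hPre := hss.removeSourceSink_Pre hwf hu hut
  have hfire : (N.removeSourceSink p t).fire u a = N.fire u a := by
    unfold fire
    rw [hPre, hss.removeSourceSink_Post hwf hu]
  have hPre_p : N.Pre u p = 0 := hss.2.2.2.1 u hu hut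
  refine ⟨u, Enabled.update ⟨hu, fun x => hPre ▸ hle x⟩ hPre_p c, ?_⟩
  rw [hfire, fire_update hPre_p (hss.2.2.1 u hu)]

theorem mem_R_iff (hss : N.SourceSink p t) (hwf : N.WF) (hm : m ∈ ValuationOn N.places) :
    m ∈ N.R ↔
      restrictTo (N.places \ {p}) m ∈ (N.removeSourceSink p t).R ∧ m p ≤ N.m0 p := by
  classical
  refine ⟨fun h => ⟨?_, apply_le_m0_of_mem_R hss.2.2.1 h⟩, fun ⟨h, hmp⟩ => ?_⟩
  · exact ReflTransGen.lift' (restrictTo (N.places \ {p}))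
      (fun _ _ h => hss.reflTransGen_removeSourceSink_of_step h) _ _ h
  · have hdrain : ReflTransGen N.Step N.m0 (update N.m0 p (m p)) := by
      simpa [Nat.add_sub_cancel' hmp] using
        hss.reflTransGen_update_add N.m0 (m p) (N.m0 p - m p)
    have hreplay : ReflTransGen N.Step (update (N.removeSourceSink p t).m0 p (m p))
        (update (restrictTo (N.places \ {p}) m) p (m p)) :=
      ReflTransGen.lift (update · p (m p))
        (fun _ _ h => hss.step_update_of_step_removeSourceSink hwf h _) _ _ h
    have hm0 : (N.removeSourceSink p t).m0 = update N.m0 p 0 :=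
      restrictTo_diff_singleton_eq_update hwf.2.2.1 p
    rw [hm0, restrictTo_diff_singleton_eq_update hm, update_idem, update_idem,
      update_eq_self] at hreplay
    exact hdrain.trans hreplay

end SourceSink

end PNet

theorem netAbstraction_removeSourceSink_general {X T₁ T₂ : Type}
    (N₁ : PNet X T₁) (N₂ : PNet X T₂) (hwf₂ : N₂.WF)
    (W : Set X) (S : Set (X → ℕ))
    (habs : NetAbstraction N₁ W S N₂)
    (p : X) (t : T₂) (hss : N₂.SourceSink p t) :
    NetAbstraction N₁ (W ∪ {p})
      {e | e ∈ ValuationOn (W ∪ {p}) ∧ restrictTo W e ∈ S ∧ e p ≤ N₂.m0 p}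
      (N₂.removeSourceSink p t) := by
  set N₃ := N₂.removeSourceSink p t
  have hV : W ∪ {p} ∪ N₁.places ∪ N₃.places = W ∪ N₁.places ∪ N₂.places := by
    ext x
    by_cases hx : x = p <;> simp [N₃, PNet.removeSourceSink, hx, hss.1]
  have hR (f : X → ℕ) : restrictTo N₂.places f ∈ N₂.R ↔
      restrictTo N₃.places f ∈ N₃.R ∧ f p ≤ N₂.m0 p := by
    rw [hss.mem_R_iff hwf₂ (restrictTo_mem_valuationOn _ _), restrictTo_restrictTo,
      Set.inter_eq_left.2 Set.sdiff_subset, restrictTo_apply_of_mem hss.1]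
    rfl
  have hW (f : X → ℕ) : restrictTo W (restrictTo (W ∪ {p}) f) = restrictTo W f := by
    rw [restrictTo_restrictTo, Set.inter_eq_left.2 Set.subset_union_left]
  unfold NetAbstraction at habs ⊢
  rw [habs, hV]
  congr 1
  ext f
  simp only [liftTo, Set.mem_inter_iff, Set.mem_ofPred_eq, hR, hW, restrictTo_mem_valuationOn,
    restrictTo_apply_of_mem (Set.mem_union_right W (Set.mem_singleton p))]
  tauto

/-- Net-abstractions are preserved by removal of a source-sink pair
`(p, t)` of `N₂` with `k = m₀₂(p)`, the constraint system being extended with the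
variable `p` and the inequality `p ≤ k`. -/
theorem netAbstraction_removeSourceSink {X T₁ T₂ : Type} [Countable X] [DecidableEq X]
    (N₁ : PNet X T₁) (N₂ : PNet X T₂) (hwf₁ : N₁.WF) (hwf₂ : N₂.WF)
    (W : Set X) (hW : W.Finite) (S : Set (X → ℕ)) (hS : S ⊆ ValuationOn W)
    (habs : NetAbstraction N₁ W S N₂)
    (p : X) (t : T₂) (hss : N₂.SourceSink p t) :
    NetAbstraction N₁ (W ∪ {p})
      {e | e ∈ ValuationOn (W ∪ {p}) ∧ restrictTo W e ∈ S ∧ e p ≤ N₂.m0 p}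
      (N₂.removeSourceSink p t) :=
  netAbstraction_removeSourceSink_general N₁ N₂ hwf₂ W S habs p t hss
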